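/- arXiv:2507.16496 — 2 statements merged into one kernel-verified Lean document; each statement's English description precedes it below -/
import Mathlib

section
/- The union over $x \in [0,1]$ of the relaxed feasible sets $\{(\tilde f, f) : x \underline f \le f \le x \overline f,\ (1-x)\underline M \le \tilde f - f \le (1-x)\overline M\}$ equals the convex hull of the two sets $\{(\tilde f, f) : f = \tilde f, \underline f \le f \le \overline f\}$ (the $x=1$ segment) and $\{(\tilde f, 0) : \underline M \le \tilde f \le \overline M\}$ (the $x=0$ segment), provided $\underline M \le \underline f < 0 < \overline f \le \overline M$. -/
/-- The union over `x ∈ [0,1]` of the relaxed big-M feasible sets in the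
`(f̃, f)` plane equals the convex hull of the `x = 1` segment
(`f = f̃ ∈ [f̲, f̄]`) and the `x = 0` segment (`f = 0`, `f̃ ∈ [M̲, M̄]`),
provided `M̲ ≤ f̲ < 0 < f̄ ≤ M̄`. -/
theorem relaxation_union_eq_convexHull
    (Ml Mu flo fhi : ℝ)
    (h1 : Ml ≤ flo) (h2 : flo < 0) (h3 : (0:ℝ) < fhi) (h4 : fhi ≤ Mu) :
    (⋃ x ∈ Set.Icc (0:ℝ) 1,
        {p : ℝ × ℝ | x * flo ≤ p.2 ∧ p.2 ≤ x * fhi ∧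
          (1 - x) * Ml ≤ p.1 - p.2 ∧ p.1 - p.2 ≤ (1 - x) * Mu}) =
      convexHull ℝ
        ({p : ℝ × ℝ | p.2 = p.1 ∧ flo ≤ p.2 ∧ p.2 ≤ fhi} ∪
          {p : ℝ × ℝ | p.2 = 0 ∧ Ml ≤ p.1 ∧ p.1 ≤ Mu}) := by
  apply Set.Subset.antisymm
  · rintro p hp
    simp only [Set.mem_iUnion, Set.mem_setOf_eq, Set.mem_Icc] at hp
    obtain ⟨x, ⟨hx0, hx1⟩, h5, h6, h7, h8⟩ := hp
    rcases eq_or_lt_of_le hx0 with hx | hxpos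
    · apply subset_convexHull
      right
      have hp2 : p.2 = 0 := le_antisymm (by nlinarith) (by nlinarith)
      refine ⟨hp2, by nlinarith, by nlinarith⟩
    rcases eq_or_lt_of_le hx1 with hx | hxlt
    · apply subset_convexHull
      left
      have hp2 : p.2 = p.1 := by subst hx; linarith
      refine ⟨hp2, by nlinarith, by nlinarith⟩
    · have hx1' : (0:ℝ) < 1 - x := by linarith
      apply segment_subset_convexHull
        (x := (p.2 / x, p.2 / x)) (y := ((p.1 - p.2) / (1 - x), 0))
      · left
        refine ⟨rfl, ?_, ?_⟩
        · rw [le_div_iff₀ hxpos]; nlinarith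
        · rw [div_le_iff₀ hxpos]; nlinarith
      · right
        refine ⟨rfl, ?_, ?_⟩
        · rw [le_div_iff₀ hx1']; nlinarith
        · rw [div_le_iff₀ hx1']; nlinarith
      · refine ⟨x, 1 - x, le_of_lt hxpos, le_of_lt hx1', by ring, ?_⟩
        have hx' : x ≠ 0 := ne_of_gt hxpos
        have hx1'' : (1 : ℝ) - x ≠ 0 := ne_of_gt hx1'
        ext <;> simp [Prod.smul_mk] <;> field_simp <;> ring
  · apply convexHull_min
    · rintro p (⟨hpq, hlo, hhi⟩ | ⟨hpq, hlo, hhi⟩)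
      · simp only [Set.mem_iUnion, Set.mem_setOf_eq, Set.mem_Icc]
        exact ⟨1, ⟨zero_le_one, le_refl 1⟩, by linarith, by linarith,
          by rw [hpq]; norm_num, by rw [hpq]; norm_num⟩
      · simp only [Set.mem_iUnion, Set.mem_setOf_eq, Set.mem_Icc]
        exact ⟨0, ⟨le_refl 0, zero_le_one⟩, by rw [hpq]; norm_num,
          by rw [hpq]; norm_num, by rw [hpq]; simpa using hlo,
          by rw [hpq]; simpa using hhi⟩
    · rintro p hp q hq a b ha hb hab
      simp only [Set.mem_iUnion, Set.mem_setOf_eq, Set.mem_Icc] at hp hq ⊢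
      obtain ⟨x, ⟨hx0, hx1⟩, p1, p2, p3, p4⟩ := hp
      obtain ⟨y, ⟨hy0, hy1⟩, q1, q2, q3, q4⟩ := hq
      refine ⟨a * x + b * y, ⟨by positivity, by nlinarith⟩, ?_, ?_, ?_, ?_⟩ <;>
        simp only [Prod.fst_add, Prod.snd_add, Prod.smul_fst, Prod.smul_snd,
          smul_eq_mul] <;> nlinarith
end

section
/- For a disconnected line $l = (n,m)$ (i.e., $x_l = 0$) in a network where the remaining closed lines contain a path $P$ from $n$ to $m$, the dummy flow satisfies $|\tilde f_l| = b_l |\theta_n - \theta_m| \le b_l \sum_{j \in P} \overline F_j / b_j$, where $\overline F_j = \max(\overline f_j, -\underline f_j)$. Hence $M_l := b_l \cdot \max_{P} \sum_{j \in P} \overline F_j/b_j$ over paths $P$ of potentially closed lines is a valid big-M bound for line $l$. -/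
/-!
The angle difference across the open line telescopes into the angle differences along the path
`P`, and on each closed line `j` the flow limit gives `|θ_{n_j} - θ_{m_j}| = |f_j| / b_j ≤ F̄_j / b_j`.
-/

open Finset

theorem Fin.sum_univ_castSucc_sub_succ {M : Type*} [AddCommGroup M] {K : ℕ} (g : Fin (K + 1) → M) :
    ∑ i : Fin K, (g i.castSucc - g i.succ) = g 0 - g (Fin.last K) := by
  induction K with
  | zero => simp
  | succ K ih =>
    rw [Fin.sum_univ_castSucc, ← Fin.succ_last]
    simp only [Fin.succ_castSucc, ih fun j => g j.castSucc]
    simp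

theorem abs_sub_last_le_sum_abs_sub_succ {α : Type*} [AddCommGroup α] [LinearOrder α]
    [IsOrderedAddMonoid α] {K : ℕ} (g : Fin (K + 1) → α) :
    |g 0 - g (Fin.last K)| ≤ ∑ i : Fin K, |g i.castSucc - g i.succ| := by
  rw [← Fin.sum_univ_castSucc_sub_succ]
  exact abs_sum_le_sum_abs _ _

theorem abs_le_div_of_abs_mul_le {α : Type*} [Field α] [LinearOrder α] [IsStrictOrderedRing α]
    {b x F : α} (hb : 0 < b) (h : |b * x| ≤ F) : |x| ≤ F / b := by
  rwa [le_div_iff₀ hb, mul_comm, ← abs_of_pos hb, ← abs_mul]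

/-- For an open line `l = (n, m)` whose endpoints are joined by a path of
closed lines with flow magnitudes bounded by `F̄_j`, the dummy flow satisfies
`|f̃_l| = b_l |θ_n - θ_m| ≤ b_l ∑_j F̄_j / b_j`, so this quantity is a valid
big-M bound. -/
theorem open_line_dummy_flow_bound {V : Type*}
    (θ : V → ℝ) (K : ℕ) (v : Fin (K + 1) → V)
    (b f Fhi : Fin K → ℝ)
    (hb : ∀ i, 0 < b i)
    (hflow : ∀ i, f i = b i * (θ (v i.castSucc) - θ (v i.succ)))
    (hbound : ∀ i, |f i| ≤ Fhi i)
    (bl ftl : ℝ) (hbl : 0 < bl)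
    (hftl : ftl = bl * (θ (v 0) - θ (v (Fin.last K)))) :
    |ftl| ≤ bl * ∑ i, Fhi i / b i := by
  have hangle (i : Fin K) : |θ (v i.castSucc) - θ (v i.succ)| ≤ Fhi i / b i :=
    abs_le_div_of_abs_mul_le (hb i) (hflow i ▸ hbound i)
  rw [hftl, abs_mul, abs_of_pos hbl]
  gcongr
  exact (abs_sub_last_le_sum_abs_sub_succ (θ ∘ v)).trans (sum_le_sum fun i _ => hangle i)
end
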